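/- arXiv:1303.0425 — 4 statements merged into one kernel-verified Lean document; each statement's English description precedes it below -/
import Mathlib

section
/- Let p(s) = k_I + k_P s + k_D s² + B(s) with B ∈ ℝ[s] of degree n ≥ 3. If p is Hurwitz stable (all roots in the open left half-plane), then the equation ω k_P = −Im B(jω) has at least E(n−1)/2 solutions ω in (0, ∞), where E(m) denotes the largest even number ≤ m−0, i.e., the nearest smaller-or-equal even number. -/
open Polynomial

/-- `E m` is the nearest even number `≤ m`. -/
def nearestEven (m : ℕ) : ℕ := if Even m then m else m - 1

/-!
Over `ℂ`, `p(jω) = c ∏ (jω - z)` over the roots `z` of `p`, all of which have `Re z < 0`. The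
factor `jω - z` has argument `arctan ((ω - Im z) / -Re z)`, so the total phase `θ(ω)` is
continuous and strictly increasing, vanishes at `0` because the roots come in conjugate pairs,
and tends to `n π / 2`. As `kI` and `kD (jω)²` are real, `Im p(jω) = ω kP + Im B(jω)`, which
vanishes exactly where `sin θ(ω) = 0`; by the intermediate value theorem `θ` takes each of the
values `π, 2π, …, ⌊(n - 1) / 2⌋ π` on `(0, ∞)`, at distinct frequencies.
-/

open Real Filter Topology

theorem nearestEven_div_two (m : ℕ) : nearestEven m / 2 = m / 2 := by
  unfold nearestEven
  split_ifs with h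
  · rfl
  · obtain ⟨k, rfl⟩ := Nat.not_even_iff_odd.mp h
    omega

theorem Complex.arg_eq_arctan_of_re_pos {z : ℂ} (hz : 0 < z.re) :
    z.arg = Real.arctan (z.im / z.re) := by
  have harg := abs_lt.mp (Complex.abs_arg_lt_pi_div_two_iff.mpr (Or.inl hz))
  rw [← Complex.tan_arg, Real.arctan_tan harg.1 harg.2]

/-- The argument of `∏ z ∈ R, (ω * I - z)` when every `z ∈ R` has `z.re < 0`. -/
noncomputable def rootPhase (R : Multiset ℂ) (ω : ℝ) : ℝ :=
  (R.map fun z => arctan ((ω - z.im) / -z.re)).sum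

section rootPhase

variable {R : Multiset ℂ}

theorem continuous_rootPhase (R : Multiset ℂ) : Continuous (rootPhase R) :=
  continuous_multiset_sum _ fun _ _ =>
    continuous_arctan.comp ((continuous_id.sub continuous_const).div_const _)

theorem strictMono_rootPhase (hR : ∀ z ∈ R, z.re < 0) (hne : R ≠ 0) :
    StrictMono (rootPhase R) := fun _ _ hab =>
  Multiset.sum_lt_sum_of_nonempty hne fun z hz =>
    arctan_strictMono (div_lt_div_of_pos_right (sub_lt_sub_right hab _) (neg_pos.mpr (hR z hz)))

theorem tendsto_rootPhase_atTop (hR : ∀ z ∈ R, z.re < 0) :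
    Tendsto (rootPhase R) atTop (𝓝 (Multiset.card R * (π / 2))) := by
  have := tendsto_multiset_sum (f := fun z ω => arctan ((ω - z.im) / -z.re)) (x := atTop)
    (a := fun _ => π / 2) R fun z hz =>
      (tendsto_arctan_atTop.mono_right nhdsWithin_le_nhds).comp
        ((tendsto_atTop_add_const_right _ _ tendsto_id).atTop_div_const (neg_pos.mpr (hR z hz)))
  rwa [Multiset.map_const', Multiset.sum_replicate, nsmul_eq_mul] at this

theorem rootPhase_zero_of_map_conj (hR : R.map (starRingEnd ℂ) = R) : rootPhase R 0 = 0 := by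
  have h : rootPhase R 0 = -rootPhase R 0 := by
    conv_lhs => rw [rootPhase, ← hR, Multiset.map_map]
    rw [rootPhase, ← Multiset.sum_map_neg', Multiset.map_map]
    congr 1
    refine Multiset.map_congr rfl fun z _ => ?_
    simp [← arctan_neg, neg_div]
  linarith

theorem exists_prod_ofReal_mul_I_sub_eq (hR : ∀ z ∈ R, z.re < 0) (ω : ℝ) :
    ∃ r : ℝ, 0 < r ∧ (R.map fun z => (ω : ℂ) * Complex.I - z).prod =
      r * Complex.exp (rootPhase R ω * Complex.I) := by
  induction R using Multiset.induction with
  | empty => exact ⟨1, one_pos, by simp [rootPhase]⟩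
  | cons z S ih =>
    obtain ⟨r, hr, hS⟩ := ih fun y hy => hR y (Multiset.mem_cons_of_mem hy)
    set w : ℂ := ω * Complex.I - z
    have hre : 0 < w.re := by simpa [w] using hR z (Multiset.mem_cons_self z S)
    have harg : w.arg = arctan ((ω - z.im) / -z.re) := by
      rw [Complex.arg_eq_arctan_of_re_pos hre]; simp [w]
    refine ⟨‖w‖ * r, mul_pos (norm_pos_iff.mpr fun h => by simp [h] at hre) hr, ?_⟩
    have hphase : rootPhase (z ::ₘ S) ω = w.arg + rootPhase S ω := by
      rw [harg]; simp [rootPhase]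
    rw [Multiset.map_cons, Multiset.prod_cons, hS, hphase]
    calc w * (r * Complex.exp (rootPhase S ω * Complex.I))
        = ‖w‖ * Complex.exp (w.arg * Complex.I) *
            (r * Complex.exp (rootPhase S ω * Complex.I)) := by
          rw [Complex.norm_mul_exp_arg_mul_I]
      _ = _ := by push_cast; rw [add_mul, Complex.exp_add]; ring

end rootPhase

theorem finite_sin_eq_zero_Ioo (L : ℝ) : {x ∈ Set.Ioo 0 L | sin x = 0}.Finite := by
  refine ((Set.finite_Icc (0 : ℤ) ⌈L / π⌉).image fun k : ℤ => (k : ℝ) * π).subset ?_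
  rintro x ⟨⟨hx0, hxL⟩, hsin⟩
  obtain ⟨k, rfl⟩ := sin_eq_zero_iff.mp hsin
  have hk : (0 : ℝ) ≤ k ∧ (k : ℝ) ≤ L / π :=
    ⟨(pos_of_mul_pos_left hx0 pi_pos.le).le, (le_div_iff₀ pi_pos).mpr hxL.le⟩
  exact ⟨k, ⟨by exact_mod_cast hk.1, Int.cast_le.mp (hk.2.trans (Int.le_ceil _))⟩, rfl⟩

theorem le_ncard_pos_sin_eq_zero {θ : ℝ → ℝ} {L : ℝ} {m : ℕ} (hcont : Continuous θ)
    (hmono : StrictMono θ) (h0 : θ 0 = 0) (hlim : Tendsto θ atTop (𝓝 L)) (hm : m * π < L) :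
    m ≤ {ω : ℝ | 0 < ω ∧ sin (θ ω) = 0}.ncard := by
  set S := {ω : ℝ | 0 < ω ∧ sin (θ ω) = 0}
  have hlt (ω : ℝ) : θ ω < L :=
    (hmono (lt_add_one ω)).trans_le (hmono.monotone.ge_of_tendsto hlim _)
  have himage : θ '' S ⊆ {x ∈ Set.Ioo 0 L | sin x = 0} := by
    rintro _ ⟨ω, ⟨hω, hsin⟩, rfl⟩
    exact ⟨⟨h0 ▸ hmono hω, hlt ω⟩, hsin⟩
  have hmul : (fun k : ℕ => (k : ℝ) * π) '' Set.Icc 1 m ⊆ θ '' S := by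
    rintro _ ⟨k, ⟨hk1, hkm⟩, rfl⟩
    have hkpos : 0 < (k : ℝ) * π := mul_pos (by exact_mod_cast hk1) pi_pos
    have hkL : (k : ℝ) * π < L := lt_of_le_of_lt (by gcongr) hm
    obtain ⟨b, hb, hb0⟩ :=
      ((hlim.eventually (eventually_gt_nhds hkL)).and (eventually_ge_atTop 0)).exists
    obtain ⟨ω, ⟨hω0, -⟩, hω⟩ :=
      intermediate_value_Ioo hb0 hcont.continuousOn ⟨by rwa [h0], hb⟩
    exact ⟨ω, ⟨hω0, by rw [hω, sin_nat_mul_pi]⟩, hω⟩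
  calc m = ((fun k : ℕ => (k : ℝ) * π) '' Set.Icc 1 m).ncard := by
        rw [Set.ncard_image_of_injective _ fun a b h => by simpa [pi_ne_zero] using h]
        simp
    _ ≤ (θ '' S).ncard := Set.ncard_le_ncard hmul ((finite_sin_eq_zero_Ioo L).subset himage)
    _ = S.ncard := Set.ncard_image_of_injective _ hmono.injective

theorem natDegree_C_add_C_mul_X_add_C_mul_X_sq_add {R : Type*} [Semiring R] {B : R[X]}
    (a b c : R) (hB : 2 < B.natDegree) :
    (C a + C b * X + C c * X ^ 2 + B).natDegree = B.natDegree :=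
  natDegree_add_eq_right_of_natDegree_lt (by
    have : (C a + C b * X + C c * X ^ 2).natDegree ≤ 2 := by compute_degree
    omega)

theorem map_conj_aroots (p : ℝ[X]) : (p.aroots ℂ).map (starRingEnd ℂ) = p.aroots ℂ := by
  rw [aroots, ← (IsAlgClosed.splits _).roots_map_of_injective (starRingEnd ℂ).injective,
    Polynomial.map_map]
  congr 2
  ext x
  simp

theorem im_aeval_ofReal_mul_I_eq_zero_iff {p : ℝ[X]} (hp : p ≠ 0)
    (hroots : ∀ z ∈ p.aroots ℂ, z.re < 0) (ω : ℝ) :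
    (aeval (ω * Complex.I) p).im = 0 ↔ sin (rootPhase (p.aroots ℂ) ω) = 0 := by
  obtain ⟨r, hr, hprod⟩ := exists_prod_ofReal_mul_I_sub_eq hroots ω
  have him : (aeval (ω * Complex.I) p).im =
      p.leadingCoeff * r * sin (rootPhase (p.aroots ℂ) ω) := by
    rw [(IsAlgClosed.splits _).aeval_eq_prod_aroots, hprod, Complex.exp_mul_I]
    simp [← Complex.ofReal_cos, ← Complex.ofReal_sin, mul_assoc]
  rw [him]
  simp [leadingCoeff_ne_zero.mpr hp, hr.ne']

/-- k_P-problem necessary condition (A = 1): if `p = k_I + k_P s + k_D s² + B` is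
Hurwitz stable with `deg B = n ≥ 3`, then there are at least `E(n−1)/2` singular
frequencies `ω ∈ (0, ∞)`, i.e. solutions of `ω k_P = −Im B(jω)`. -/
theorem kP_necessary_condition (B : Polynomial ℝ) (kP kI kD : ℝ)
    (hn : 3 ≤ B.natDegree)
    (hstab : ∀ z : ℂ,
      Polynomial.aeval z (Polynomial.C kI + Polynomial.C kP * Polynomial.X
        + Polynomial.C kD * Polynomial.X^2 + B) = 0 → z.re < 0) :
    nearestEven (B.natDegree - 1) / 2 ≤
      {ω : ℝ | 0 < ω ∧
        ω * kP = -(Polynomial.aeval ((ω : ℂ) * Complex.I) B).im}.ncard := by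
  set p := C kI + C kP * X + C kD * X ^ 2 + B
  have hdeg : p.natDegree = B.natDegree := natDegree_C_add_C_mul_X_add_C_mul_X_sq_add _ _ _ hn
  have hp : p ≠ 0 := ne_zero_of_natDegree_gt (hdeg ▸ hn)
  have hroots : ∀ z ∈ p.aroots ℂ, z.re < 0 := fun z hz => hstab z (mem_aroots.mp hz).2
  have hcard : Multiset.card (p.aroots ℂ) = B.natDegree :=
    IsAlgClosed.card_aroots_eq_natDegree.trans hdeg
  have him (ω : ℝ) :
      (aeval (ω * Complex.I) p).im = kP * ω + (aeval (ω * Complex.I) B).im := by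
    simp [p, mul_pow, ← Complex.ofReal_pow]
  have hS : {ω : ℝ | 0 < ω ∧ ω * kP = -(aeval ((ω : ℂ) * Complex.I) B).im} =
      {ω : ℝ | 0 < ω ∧ sin (rootPhase (p.aroots ℂ) ω) = 0} := by
    ext ω
    refine and_congr_right fun _ => ?_
    rw [← im_aeval_ofReal_mul_I_eq_zero_iff hp hroots, him, mul_comm kP, eq_neg_iff_add_eq_zero]
  have hne : p.aroots ℂ ≠ 0 := Multiset.card_pos.mp (by omega)
  have h2m : 2 * ((B.natDegree - 1) / 2) < B.natDegree := by omega
  rw [nearestEven_div_two, hS]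
  refine le_ncard_pos_sin_eq_zero (continuous_rootPhase _) (strictMono_rootPhase hroots hne)
    (rootPhase_zero_of_map_conj (map_conj_aroots p)) (tendsto_rootPhase_atTop hroots) ?_
  calc ((B.natDegree - 1) / 2 : ℕ) * π = (2 * ((B.natDegree - 1) / 2) : ℕ) * (π / 2) := by
        push_cast; ring
    _ < Multiset.card (p.aroots ℂ) * (π / 2) := by rw [hcard]; gcongr
end

section
/- Let B(s) = s⁵ + s⁴ − 3s³ − s² + 2s. Then for every choice of real parameters k_P, k_I, k_D, the polynomial p(s) = k_I + k_P s + k_D s² + B(s) has at least one root with nonnegative real part; i.e., no PID controller Hurwitz-stabilizes this loop. -/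
open Polynomial


/-- All coefficients up to the degree are positive. -/
def PosCoeffs (p : ℝ[X]) : Prop := ∀ k ≤ p.natDegree, 0 < p.coeff k

lemma PosCoeffs.ne_zero {p : ℝ[X]} (h : PosCoeffs p) : p ≠ 0 := by
  intro h0
  have := h 0 (by simp [h0])
  simp [h0] at this

lemma PosCoeffs.coeff_nonneg {p : ℝ[X]} (h : PosCoeffs p) (k : ℕ) : 0 ≤ p.coeff k := by
  rcases le_or_gt k p.natDegree with hk | hk
  · exact (h k hk).le
  · simp [coeff_eq_zero_of_natDegree_lt hk]

lemma PosCoeffs.mul {p q : ℝ[X]} (hp : PosCoeffs p) (hq : PosCoeffs q) : PosCoeffs (p * q) := by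
  intro k hk
  rw [natDegree_mul hp.ne_zero hq.ne_zero] at hk
  rw [coeff_mul]
  apply Finset.sum_pos'
  · rintro ⟨i, j⟩ _
    exact mul_nonneg (hp.coeff_nonneg i) (hq.coeff_nonneg j)
  · refine ⟨(min k p.natDegree, k - min k p.natDegree), ?_, ?_⟩
    · simp [Finset.mem_antidiagonal, Nat.add_sub_cancel' (min_le_left k p.natDegree)]
    · have h1 : min k p.natDegree ≤ p.natDegree := min_le_right _ _
      have h2 : k - min k p.natDegree ≤ q.natDegree := by omega
      exact mul_pos (hp _ h1) (hq _ h2)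

lemma posCoeffs_linear {c : ℝ} (hc : 0 < c) : PosCoeffs (X + C c) := by
  intro k hk
  have hd : (X + C c).natDegree = 1 := by compute_degree!
  rw [hd] at hk
  interval_cases k <;> simp [coeff_X_zero, coeff_X_one, hc]

lemma posCoeffs_quadratic {a b : ℝ} (ha : 0 < a) (hb : 0 < b) :
    PosCoeffs (X ^ 2 + C a * X + C b) := by
  intro k hk
  have hd : (X ^ 2 + C a * X + C b).natDegree = 2 := by compute_degree!
  rw [hd] at hk
  interval_cases k <;>
    simp [coeff_X_zero, coeff_X_one, coeff_X_pow, coeff_C, ha, hb]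

/-- A real polynomial with positive leading coefficient all of whose complex roots
have negative real part has all coefficients positive. -/
lemma posCoeffs_of_roots_neg_re :
    ∀ n (p : ℝ[X]), p.natDegree = n → 0 < p.leadingCoeff →
      (∀ z : ℂ, aeval z p = 0 → z.re < 0) → PosCoeffs p := by
  intro n
  induction n using Nat.strong_induction_on with
  | _ n IH =>
    intro p hn hlc hroots
    rcases Nat.eq_zero_or_pos n with h0 | hpos
    · intro k hk
      rw [hn, h0] at hk
      interval_cases k
      have : p.coeff p.natDegree = p.leadingCoeff := rfl
      rw [hn, h0] at this
      rw [this]; exact hlc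
    · -- find a complex root
      have hp0 : p ≠ 0 := fun h => by simp [h, leadingCoeff_zero] at hlc
      obtain ⟨z, hz⟩ : ∃ z : ℂ, aeval z p = 0 := by
        apply IsAlgClosed.exists_aeval_eq_zero
        have hdpos : 0 < p.degree := natDegree_pos_iff_degree_pos.mp (by omega)
        exact hdpos.ne'
      have hzre : z.re < 0 := hroots z hz
      rcases eq_or_ne z.im 0 with him | him
      · -- real root
        have hx : IsRoot p z.re := by
          have hz' : z = (z.re : ℂ) := by
            apply Complex.ext <;> simp [him]
          rw [hz'] at hz
          erw [aeval_ofReal, RCLike.ofReal_eq_zero] at hz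
          exact hz
        obtain ⟨q, hq⟩ : X + C (-z.re) ∣ p := by
          have := (dvd_iff_isRoot (p := p) (a := z.re)).mpr hx
          simpa [sub_eq_add_neg] using this
        have hqne : q ≠ 0 := fun h => hp0 (by simp [hq, h])
        have hlin : (X + C (-z.re)).Monic := monic_X_add_C _
        have hdq : q.natDegree = n - 1 := by
          have := natDegree_mul (p := X + C (-z.re)) (q := q) hlin.ne_zero hqne
          rw [← hq, hn] at this
          have h1 : (X + C (-z.re)).natDegree = 1 := natDegree_X_add_C _
          omega
        have hlcq : 0 < q.leadingCoeff := by
          have := leadingCoeff_mul (X + C (-z.re)) q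
          rw [← hq, hlin.leadingCoeff, one_mul] at this
          rwa [← this]
        have hrootsq : ∀ w : ℂ, aeval w q = 0 → w.re < 0 := by
          intro w hw
          apply hroots
          rw [hq, map_mul, hw, mul_zero]
        have hPq : PosCoeffs q := IH (n - 1) (by omega) q hdq hlcq hrootsq
        rw [hq]
        exact (posCoeffs_linear (by linarith)).mul hPq
      · -- nonreal root: quadratic factor
        obtain ⟨r, hr⟩ := p.quadratic_dvd_of_aeval_eq_zero_im_ne_zero hz him
        have hz0 : z ≠ 0 := fun h => him (by simp [h])
        obtain ⟨b, hbpos, hbeq⟩ : ∃ b : ℝ, 0 < b ∧ b = ‖z‖ ^ 2 :=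
          ⟨_, pow_pos (norm_pos_iff.mpr hz0) 2, rfl⟩
        rw [← hbeq] at hr
        have hquad : X ^ 2 - C (2 * z.re) * X + C b
            = X ^ 2 + C (-(2 * z.re)) * X + C b := by
          rw [map_neg]; ring
        rw [hquad] at hr
        set d : ℝ[X] := X ^ 2 + C (-(2 * z.re)) * X + C b with hd
        have hc2 : d.coeff 2 = 1 := by
          simp [hd, coeff_C, coeff_X_pow]
        have hdne : d ≠ 0 := by
          intro h
          rw [h] at hc2
          simp at hc2
        have hrne : r ≠ 0 := fun h => hp0 (by simp [hr, h])
        have hdd : d.natDegree = 2 := by rw [hd]; compute_degree!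
        have hdlc : d.leadingCoeff = 1 := by
          rw [leadingCoeff, hdd]
          exact hc2
        have hdr : r.natDegree = n - 2 := by
          have := natDegree_mul hdne hrne
          rw [← hr, hn, hdd] at this
          omega
        have hlcr : 0 < r.leadingCoeff := by
          have := leadingCoeff_mul d r
          rw [← hr, hdlc, one_mul] at this
          rwa [← this]
        have hn2 : 2 ≤ n := by
          have := natDegree_mul hdne hrne
          rw [← hr, hn, hdd] at this
          omega
        have hrootsr : ∀ w : ℂ, aeval w r = 0 → w.re < 0 := by
          intro w hw
          apply hroots
          rw [hr, map_mul, hw, mul_zero]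
        have hPr : PosCoeffs r := IH (n - 2) (by omega) r hdr hlcr hrootsr
        rw [hr]
        exact (posCoeffs_quadratic (by linarith) hbpos).mul hPr


/-- Example 4: for `B(s) = s⁵ + s⁴ − 3s³ − s² + 2s`, no PID controller Hurwitz-stabilizes
the loop: `p = k_I + k_P s + k_D s² + B` always has a root with nonnegative real part. -/
theorem no_pid_stabilizer_example4 (kP kI kD : ℝ) :
    ∃ z : ℂ,
      Polynomial.aeval z (Polynomial.C kI + Polynomial.C kP * Polynomial.X
        + Polynomial.C kD * Polynomial.X^2
        + (Polynomial.X^5 + Polynomial.X^4 - 3 * Polynomial.X^3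
            - Polynomial.X^2 + 2 * Polynomial.X : Polynomial ℝ)) = 0
      ∧ 0 ≤ z.re := by
  by_contra h
  push_neg at h
  set p : ℝ[X] := Polynomial.C kI + Polynomial.C kP * Polynomial.X
        + Polynomial.C kD * Polynomial.X^2
        + (Polynomial.X^5 + Polynomial.X^4 - 3 * Polynomial.X^3
            - Polynomial.X^2 + 2 * Polynomial.X : Polynomial ℝ) with hp
  have hdeg : p.natDegree = 5 := by rw [hp]; compute_degree!
  have hlc : 0 < p.leadingCoeff := by
    rw [leadingCoeff, hdeg, hp]
    simp [coeff_C, coeff_X_pow, coeff_X]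
  have hroots : ∀ z : ℂ, aeval z p = 0 → z.re < 0 := fun z hz => h z hz
  have hPos : PosCoeffs p := posCoeffs_of_roots_neg_re 5 p hdeg hlc hroots
  have h3 : 0 < p.coeff 3 := hPos 3 (by omega)
  have hc3 : p.coeff 3 = -3 := by
    rw [hp]
    simp [coeff_C, coeff_X_pow, coeff_X]
  rw [hc3] at h3
  linarith
end

section
/- Let B, A ∈ ℝ[s] with n = deg B = deg A + 2 (neutral type), leading coefficients b_n and a_m respectively, and L > 0. Along any sequence ω_k → ∞ of singular frequencies for a fixed k_P (solutions of ω k_P = −Im(B(jω)e^{jωL}/A(jω))), the corresponding boundary-line intercepts satisfy k_D-value −Re(B(jω_k)e^{jω_k L}/A(jω_k))/ω_k² → ±b_n/a_m; i.e., the boundary lines k_I − ω²k_D = −Re(B(jω)e^{jωL}/A(jω)) converge (after dividing by ω²) to the infinity root boundaries k_D = ±b_n/a_m. -/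
/-!
On the imaginary axis `z = jω` one has `z² = -ω²`, so `deg B = deg A + 2` gives
`B(jω) / (A(jω) ω²) → -b_n / a_m`. The delay factor `e^{jωL}` has modulus one, hence
`F(ω) = B(jω) e^{jωL} / A(jω)` satisfies `‖F‖ / ω² → |b_n / a_m|`. At a singular frequency
`Im F = -ω k_P`, so `Im F / ω² → 0` and therefore `|Re F| / ω² → |b_n / a_m|`; this is the claim,
because `min |x - c| |x + c| = | |x| - |c| |`.
-/

open Polynomial Filter Topology Bornology

theorem Polynomial.tendsto_eval_div_pow_natDegree_cobounded {𝕜 : Type*} [NormedField 𝕜]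
    (p : 𝕜[X]) :
    Tendsto (fun z => p.eval z / z ^ p.natDegree) (cobounded 𝕜) (𝓝 p.leadingCoeff) := by
  -- `p(z) / z ^ natDegree p` is the reversed polynomial evaluated at `z⁻¹ → 0`.
  have hrev : Tendsto (fun z : 𝕜 => p.reverse.eval z⁻¹) (cobounded 𝕜) (𝓝 p.leadingCoeff) := by
    simpa [Function.comp_def, coeff_zero_reverse, ← coeff_zero_eq_eval_zero] using
      (p.reverse.continuous.tendsto 0).comp tendsto_inv₀_cobounded
  refine hrev.congr' ?_
  filter_upwards [eventually_ne_cobounded 0] with z hz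
  let := invertibleOfNonzero hz
  rw [eq_div_iff (pow_ne_zero _ hz), ← invOf_eq_inv]
  exact eval₂_reverse_mul_pow (RingHom.id 𝕜) z p

theorem Polynomial.tendsto_aeval_div_pow_natDegree {K 𝕜 ι : Type*} [Field K] [NormedField 𝕜]
    [Algebra K 𝕜] (p : K[X]) {l : Filter ι} {z : ι → 𝕜} (hz : Tendsto z l (cobounded 𝕜)) :
    Tendsto (fun i => aeval (z i) p / z i ^ p.natDegree) l
      (𝓝 (algebraMap K 𝕜 p.leadingCoeff)) := by
  simpa [Function.comp_def, ← eval_map_algebraMap] using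
    (tendsto_eval_div_pow_natDegree_cobounded (p.map (algebraMap K 𝕜))).comp hz

theorem tendsto_ofReal_mul_I_cobounded {ι : Type*} {l : Filter ι} {ω : ι → ℝ}
    (hω : Tendsto ω l atTop) : Tendsto (fun i => (ω i : ℂ) * Complex.I) l (cobounded ℂ) := by
  rw [← tendsto_norm_atTop_iff_cobounded]
  simpa [Function.comp_def] using tendsto_abs_atTop_atTop.comp hω

theorem tendsto_aeval_mul_I_div_aeval_mul_I_div_sq {ι : Type*} {l : Filter ι} {A B : ℝ[X]}
    (hA : A ≠ 0) (hdeg : B.natDegree = A.natDegree + 2) {ω : ι → ℝ} (hω : Tendsto ω l atTop) :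
    Tendsto (fun i => aeval (ω i * Complex.I) B / aeval (ω i * Complex.I) A / (ω i : ℂ) ^ 2) l
      (𝓝 (-(B.leadingCoeff / A.leadingCoeff : ℝ))) := by
  have hz := tendsto_ofReal_mul_I_cobounded hω
  have hquot := ((tendsto_aeval_div_pow_natDegree B hz).div
    (tendsto_aeval_div_pow_natDegree A hz) (by simpa using hA)).neg
  push_cast
  refine hquot.congr' ?_
  filter_upwards [hω.eventually_ne_atTop 0] with i hi
  have hz2 : ((ω i : ℂ) * Complex.I) ^ 2 = -(ω i : ℂ) ^ 2 := by
    rw [mul_pow, Complex.I_sq, mul_neg_one]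
  have hi' : (ω i : ℂ) ≠ 0 := by exact_mod_cast hi
  rw [Pi.div_apply, hdeg, pow_add, hz2]
  field_simp

theorem Complex.tendsto_abs_re_of_tendsto_norm {ι : Type*} {l : Filter ι} {g : ι → ℂ} {r : ℝ}
    (hnorm : Tendsto (fun i => ‖g i‖) l (𝓝 r)) (him : Tendsto (fun i => (g i).im) l (𝓝 0)) :
    Tendsto (fun i => |(g i).re|) l (𝓝 r) := by
  have hlow : Tendsto (fun i => ‖g i‖ - |(g i).im|) l (𝓝 r) := by
    simpa using hnorm.sub him.abs
  refine tendsto_of_tendsto_of_tendsto_of_le_of_le hlow hnorm (fun i => ?_)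
    (fun i => abs_re_le_norm _)
  linarith [norm_le_abs_re_add_abs_im (g i)]

theorem min_abs_sub_abs_add (x c : ℝ) : min |x - c| |x + c| = |(|x| - |c|)| := by
  rcases le_total 0 x with hx | hx <;> rcases le_total 0 c with hc | hc <;>
    simp only [abs_of_nonneg, abs_of_nonpos, hx, hc] <;> grind

theorem tendsto_min_abs_sub_abs_add_zero {ι : Type*} {l : Filter ι} {x : ι → ℝ} {c : ℝ}
    (h : Tendsto (fun i => |x i|) l (𝓝 |c|)) :
    Tendsto (fun i => min |x i - c| |x i + c|) l (𝓝 0) := by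
  simpa [min_abs_sub_abs_add] using (h.sub_const |c|).abs

theorem infinity_root_boundaries_general (A B : Polynomial ℝ) (L kP : ℝ)
    (hA : A ≠ 0) (hneutral : B.natDegree = A.natDegree + 2)
    (ω : ℕ → ℝ) (hpos : ∀ k, 0 < ω k)
    (htop : Tendsto ω atTop atTop)
    (hsing : ∀ k, ω k * kP
        = -(Polynomial.aeval ((ω k : ℂ) * Complex.I) B
            * Complex.exp ((L : ℂ) * ((ω k : ℂ) * Complex.I))
            / Polynomial.aeval ((ω k : ℂ) * Complex.I) A).im) :
    Tendsto (fun k =>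
        min (|(-(Polynomial.aeval ((ω k : ℂ) * Complex.I) B
                  * Complex.exp ((L : ℂ) * ((ω k : ℂ) * Complex.I))
                  / Polynomial.aeval ((ω k : ℂ) * Complex.I) A).re) / (ω k)^2
              - B.leadingCoeff / A.leadingCoeff|)
            (|(-(Polynomial.aeval ((ω k : ℂ) * Complex.I) B
                  * Complex.exp ((L : ℂ) * ((ω k : ℂ) * Complex.I))
                  / Polynomial.aeval ((ω k : ℂ) * Complex.I) A).re) / (ω k)^2
              + B.leadingCoeff / A.leadingCoeff|))
      atTop (nhds 0) := by
  set F : ℕ → ℂ := fun k => aeval ((ω k : ℂ) * Complex.I) B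
    * Complex.exp ((L : ℂ) * ((ω k : ℂ) * Complex.I)) / aeval ((ω k : ℂ) * Complex.I) A
  set G : ℕ → ℂ := fun k => F k / ((ω k ^ 2 : ℝ) : ℂ)
  have hnorm : Tendsto (fun k => ‖G k‖) atTop (𝓝 |B.leadingCoeff / A.leadingCoeff|) := by
    have hexp (k : ℕ) : ‖Complex.exp ((L : ℂ) * ((ω k : ℂ) * Complex.I))‖ = 1 := by
      simpa [mul_assoc] using Complex.norm_exp_ofReal_mul_I (L * ω k)
    simpa [G, F, hexp, div_mul_eq_mul_div, abs_div] using
      (tendsto_aeval_mul_I_div_aeval_mul_I_div_sq hA hneutral htop).norm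
  have him : Tendsto (fun k => (G k).im) atTop (𝓝 0) := by
    have hG (k : ℕ) : (G k).im = -kP / ω k := by
      rw [Complex.div_ofReal_im, ← neg_neg (F k).im, ← hsing k]
      field_simp [(hpos k).ne']
    simpa [hG] using tendsto_const_nhds.div_atTop htop
  have hre (k : ℕ) : -(F k).re / ω k ^ 2 = -(G k).re := by
    rw [Complex.div_ofReal_re, neg_div]
  show Tendsto (fun k => min |-(F k).re / ω k ^ 2 - _| |-(F k).re / ω k ^ 2 + _|) atTop (𝓝 0)
  simp only [hre]
  refine tendsto_min_abs_sub_abs_add_zero ?_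
  simpa only [abs_neg] using Complex.tendsto_abs_re_of_tendsto_norm hnorm him

/-- Infinity root boundaries for neutral-type quasi-polynomials: along any sequence
of singular frequencies `ω_k → ∞` (for a fixed `k_P`), the boundary-line values
`−Re(B(jω_k)e^{jω_k L}/A(jω_k))/ω_k²` approach the set `{b_n/a_m, −b_n/a_m}`. -/
theorem infinity_root_boundaries (A B : Polynomial ℝ) (L kP : ℝ) (hL : 0 < L)
    (hA : A ≠ 0) (hB : B ≠ 0) (hneutral : B.natDegree = A.natDegree + 2)
    (ω : ℕ → ℝ) (hpos : ∀ k, 0 < ω k)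
    (hAne : ∀ k, Polynomial.aeval ((ω k : ℂ) * Complex.I) A ≠ 0)
    (htop : Tendsto ω atTop atTop)
    (hsing : ∀ k, ω k * kP
        = -(Polynomial.aeval ((ω k : ℂ) * Complex.I) B
            * Complex.exp ((L : ℂ) * ((ω k : ℂ) * Complex.I))
            / Polynomial.aeval ((ω k : ℂ) * Complex.I) A).im) :
    Tendsto (fun k =>
        min (|(-(Polynomial.aeval ((ω k : ℂ) * Complex.I) B
                  * Complex.exp ((L : ℂ) * ((ω k : ℂ) * Complex.I))
                  / Polynomial.aeval ((ω k : ℂ) * Complex.I) A).re) / (ω k)^2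
              - B.leadingCoeff / A.leadingCoeff|)
            (|(-(Polynomial.aeval ((ω k : ℂ) * Complex.I) B
                  * Complex.exp ((L : ℂ) * ((ω k : ℂ) * Complex.I))
                  / Polynomial.aeval ((ω k : ℂ) * Complex.I) A).re) / (ω k)^2
              + B.leadingCoeff / A.leadingCoeff|))
      atTop (nhds 0) :=
  infinity_root_boundaries_general A B L kP hA hneutral ω hpos htop hsing
end

section
/- Let B, A ∈ ℝ[s] with n = deg B ≥ deg A + 2 and fix k_P ≠ 0 and L > 0. Then along any sequence of singular frequencies ω_k → ∞ (solutions of ω k_P = −|B(jω)/A(jω)| sin(ωL + φ(ω)) with φ(ω) = arg(B(jω)/A(jω))), one has sin(ω_k L + φ(ω_k)) → 0, and hence the distances from ω_k to the set {kπ/L : k ∈ ℕ} ∪ {(k+1/2)π/L : k ∈ ℕ} tend to 0 (according to whether φ(ω) → 0, π or ±π/2). -/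
open Polynomial Filter

/-! On the imaginary axis `B(iω)/A(iω)` behaves like `c (iω)^d`, with `c = lc B / lc A` real
and `d = deg B - deg A ≥ 2`. So `|B/A|` grows faster than `ω`, which forces
`sin (ωL + φ) = -ω k_P / |B/A| → 0`; and the phase of `B/A` tends to that of `c i^d`, a
fourth root of unity, so `sin 2φ → 0`. Rounding `ωL + φ` and `2φ` to the nearest multiples of
`π` puts `ωL` within `o(1)` of a multiple of `π/2`, which is nonnegative for large `ω`. -/

open Asymptotics Topology Bornology

section ImaginaryAxis

open Complex

namespace Polynomial

theorem isEquivalent_aeval_ofReal_mul_I (P : ℝ[X]) :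
    (fun x : ℝ => aeval ((x : ℂ) * I) P) ~[atTop]
      fun x => (P.leadingCoeff : ℂ) * ((x : ℂ) * I) ^ P.natDegree := by
  have hI : Tendsto (fun x : ℝ => (x : ℂ) * I) atTop (cobounded ℂ) := by
    rw [← tendsto_norm_atTop_iff_cobounded]
    simpa using tendsto_abs_atTop_atTop
  have := (P.map (algebraMap ℝ ℂ)).isEquivalent_cobounded_leading_monomial.comp_tendsto hI
  simp only [Function.comp_def, eval_map_algebraMap, leadingCoeff_map, natDegree_map] at this
  exact this

theorem tendsto_aeval_div_aeval_div_leading_monomial (A B : ℝ[X]) (hA : A ≠ 0) (hB : B ≠ 0)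
    (hAB : A.natDegree ≤ B.natDegree) :
    Tendsto (fun x : ℝ => aeval ((x : ℂ) * I) B / aeval ((x : ℂ) * I) A /
        (((B.leadingCoeff / A.leadingCoeff : ℝ) : ℂ) *
          ((x : ℂ) * I) ^ (B.natDegree - A.natDegree))) atTop (𝓝 1) := by
  have hne : ∀ᶠ x : ℝ in atTop, (x : ℂ) * I ≠ 0 :=
    (eventually_ne_atTop 0).mono fun x hx => mul_ne_zero (ofReal_ne_zero.2 hx) I_ne_zero
  have hequiv : (fun x : ℝ => aeval ((x : ℂ) * I) B / aeval ((x : ℂ) * I) A) ~[atTop]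
      fun x => ((B.leadingCoeff / A.leadingCoeff : ℝ) : ℂ) *
        ((x : ℂ) * I) ^ (B.natDegree - A.natDegree) :=
    (B.isEquivalent_aeval_ofReal_mul_I.div A.isEquivalent_aeval_ofReal_mul_I).congr_right
      (hne.mono fun x hx => by
        dsimp only
        rw [Pi.div_apply, mul_div_mul_comm, ofReal_div, pow_sub₀ _ hx hAB, ← div_eq_mul_inv])
  have hc : ((B.leadingCoeff / A.leadingCoeff : ℝ) : ℂ) ≠ 0 := by
    exact_mod_cast div_ne_zero (leadingCoeff_ne_zero.2 hB) (leadingCoeff_ne_zero.2 hA)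
  exact (isEquivalent_iff_tendsto_one
    (hne.mono fun x hx => mul_ne_zero hc (pow_ne_zero _ hx))).1 hequiv

end Polynomial

theorem Complex.sin_two_mul_arg (z : ℂ) : Real.sin (2 * arg z) = ((z / ‖z‖) ^ 2).im := by
  rcases eq_or_ne z 0 with rfl | hz
  · simp
  rw [Real.sin_two_mul, sin_arg, cos_arg hz, sq]
  simp [div_ofReal_re, div_ofReal_im]
  ring

variable {z : ℝ → ℂ} {c : ℝ} {d : ℕ}

theorem tendsto_div_norm_of_tendsto_div_monomial
    (hz : Tendsto (fun x : ℝ => z x / (c * ((x : ℂ) * I) ^ d)) atTop (𝓝 1)) (hc : c ≠ 0)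
    (hd : 1 < d) : Tendsto (fun x : ℝ => x / ‖z x‖) atTop (𝓝 0) := by
  have hpow := (tendsto_pow_div_pow_atTop_zero (𝕜 := ℝ) hd).const_mul |c|⁻¹
  have hnorm := ((continuous_norm.tendsto 1).comp hz).inv₀ (by simp)
  have := hpow.mul hnorm
  rw [mul_zero, zero_mul] at this
  refine this.congr' ((eventually_gt_atTop 0).mono fun x hx => ?_)
  simp only [Function.comp_apply, norm_div, norm_mul, norm_pow, norm_real, norm_I,
    Real.norm_eq_abs, abs_of_pos hx, mul_one, pow_one]
  field_simp

theorem tendsto_div_norm_self_of_tendsto_div_monomial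
    (hz : Tendsto (fun x : ℝ => z x / (c * ((x : ℂ) * I) ^ d)) atTop (𝓝 1)) (hc : c ≠ 0) :
    Tendsto (fun x : ℝ => z x / ‖z x‖) atTop (𝓝 (((c / |c| : ℝ) : ℂ) * I ^ d)) := by
  have hunit : ContinuousAt (fun w : ℂ => w / ‖w‖) 1 :=
    continuousAt_id.div (continuous_ofReal.comp continuous_norm).continuousAt (by simp)
  have := (hunit.tendsto.comp hz).mul_const (((c / |c| : ℝ) : ℂ) * I ^ d)
  rw [norm_one, ofReal_one, div_one, one_mul] at this
  -- for `x > 0` the unit vector of `c (ix)^d` is the constant `(c / |c|) i^d`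
  refine this.congr' ((eventually_gt_atTop 0).mono fun x hx => ?_)
  have hx' : (x : ℂ) ≠ 0 := ofReal_ne_zero.2 hx.ne'
  have hc' : (c : ℂ) ≠ 0 := ofReal_ne_zero.2 hc
  have hc'' : ((|c| : ℝ) : ℂ) ≠ 0 := ofReal_ne_zero.2 (abs_ne_zero.2 hc)
  simp only [Function.comp_apply, norm_div, norm_mul, norm_pow, norm_real, norm_I,
    Real.norm_eq_abs, abs_of_pos hx, mul_one]
  push_cast
  rw [mul_pow]
  field_simp

theorem tendsto_sin_two_mul_arg_of_tendsto_div_monomial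
    (hz : Tendsto (fun x : ℝ => z x / (c * ((x : ℂ) * I) ^ d)) atTop (𝓝 1)) (hc : c ≠ 0) :
    Tendsto (fun x : ℝ => Real.sin (2 * arg (z x))) atTop (𝓝 0) := by
  have hlim : ((((c / |c| : ℝ) : ℂ) * I ^ d) ^ 2).im = 0 := by
    rw [mul_pow, ← pow_mul, mul_comm d 2, pow_mul, I_sq]
    exact_mod_cast ofReal_im ((c / |c|) ^ 2 * (-1) ^ d)
  simp_rw [sin_two_mul_arg, ← hlim]
  exact ((continuous_im.comp (continuous_pow 2)).tendsto _).comp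
    (tendsto_div_norm_self_of_tendsto_div_monomial hz hc)

end ImaginaryAxis

section RoundingToMultiplesOfPi

open Real

theorem abs_sub_round_div_pi_mul_pi_le (x : ℝ) :
    |x - round (x / π) * π| ≤ π / 2 * |sin x| := by
  have hπ := pi_pos
  have hdist : |x - round (x / π) * π| ≤ π / 2 := by
    calc |x - round (x / π) * π| = |x / π - round (x / π)| * π := by
          rw [← abs_of_pos hπ, ← abs_mul, abs_of_pos hπ, sub_mul, div_mul_cancel₀ _ hπ.ne']
      _ ≤ 1 / 2 * π := by gcongr; exact abs_sub_round _
      _ = π / 2 := by ring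
  have hsin := mul_abs_le_abs_sin hdist
  rw [sin_sub_int_mul_pi, abs_mul, abs_neg_one_zpow, one_mul] at hsin
  calc |x - round (x / π) * π| = π / 2 * (2 / π * |x - round (x / π) * π|) := by field_simp
    _ ≤ π / 2 * |sin x| := by gcongr

theorem tendsto_sub_round_div_pi_mul_pi {α : Type*} {l : Filter α} {x : α → ℝ}
    (h : Tendsto (fun k => sin (x k)) l (𝓝 0)) :
    Tendsto (fun k => x k - round (x k / π) * π) l (𝓝 0) := by
  rw [tendsto_zero_iff_abs_tendsto_zero]
  refine squeeze_zero (fun k => abs_nonneg _) (fun k => abs_sub_round_div_pi_mul_pi_le (x k)) ?_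
  simpa using h.abs.const_mul (π / 2)

theorem exists_int_tendsto_sub_mul_pi_div_two {α : Type*} {l : Filter α} {t φ : α → ℝ}
    (h₁ : Tendsto (fun k => sin (t k + φ k)) l (𝓝 0))
    (h₂ : Tendsto (fun k => sin (2 * φ k)) l (𝓝 0)) :
    ∃ j : α → ℤ, Tendsto (fun k => t k - j k * (π / 2)) l (𝓝 0) := by
  refine ⟨fun k => 2 * round ((t k + φ k) / π) - round (2 * φ k / π), ?_⟩
  have := (tendsto_sub_round_div_pi_mul_pi h₁).sub
    ((tendsto_sub_round_div_pi_mul_pi h₂).div_const 2)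
  rw [zero_div, sub_zero] at this
  refine this.congr fun k => ?_
  push_cast
  ring

theorem natCast_mul_pi_div_two_mul_mem (L : ℝ) (j : ℕ) :
    j * π / (2 * L) ∈
      {x : ℝ | ∃ n : ℕ, x = n * π / L} ∪
        {x : ℝ | ∃ n : ℕ, x = (n + 1/2) * π / L} := by
  rcases Nat.even_or_odd' j with ⟨n, rfl | rfl⟩
  · refine Or.inl ⟨n, ?_⟩
    rw [Nat.cast_mul, Nat.cast_two, mul_assoc, mul_div_mul_left _ _ two_ne_zero]
  · refine Or.inr ⟨n, ?_⟩
    rw [show ((2 * n + 1 : ℕ) : ℝ) * π = 2 * ((n + 1 / 2) * π) by push_cast; ring,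
      mul_div_mul_left _ _ two_ne_zero]

theorem tendsto_infDist_of_tendsto_sub_int_mul_pi_div_two {α : Type*} {l : Filter α}
    {ω : α → ℝ} {L : ℝ} {j : α → ℤ} (hL : 0 < L) (hω : Tendsto ω l atTop)
    (hj : Tendsto (fun k => ω k * L - j k * (π / 2)) l (𝓝 0)) :
    Tendsto (fun k => Metric.infDist (ω k)
      ({x : ℝ | ∃ n : ℕ, x = n * π / L} ∪ {x : ℝ | ∃ n : ℕ, x = (n + 1/2) * π / L}))
      l (𝓝 0) := by
  have hj_nonneg : ∀ᶠ k in l, 0 ≤ j k := by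
    filter_upwards [hj.eventually (gt_mem_nhds one_pos), hω.eventually_ge_atTop (1 / L)]
      with k hk hωk
    rw [div_le_iff₀ hL] at hωk
    have : (0 : ℝ) < j k := by nlinarith [pi_pos]
    exact_mod_cast this.le
  have hlim := hj.abs.div_const L
  rw [abs_zero, zero_div] at hlim
  refine squeeze_zero' (Eventually.of_forall fun k => Metric.infDist_nonneg) ?_ hlim
  filter_upwards [hj_nonneg] with k hk
  calc Metric.infDist (ω k) _ ≤ dist (ω k) ((j k).toNat * π / (2 * L)) :=
        Metric.infDist_le_dist_of_mem (natCast_mul_pi_div_two_mul_mem L _)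
    _ = |ω k * L - j k * (π / 2)| / L := by
        rw [Real.dist_eq, ← abs_of_pos hL, ← abs_div, abs_of_pos hL]
        congr 1
        rw [show (((j k).toNat : ℕ) : ℝ) = j k by exact_mod_cast Int.toNat_of_nonneg hk]
        field_simp

end RoundingToMultiplesOfPi

theorem singular_frequencies_high_frequency_general (A B : Polynomial ℝ) (L kP : ℝ)
    (hL : 0 < L) (hA : A ≠ 0)
    (hnm : A.natDegree + 2 ≤ B.natDegree)
    (ω : ℕ → ℝ)
    (htop : Tendsto ω atTop atTop)
    (hsing : ∀ k, ω k * kP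
        = -(‖Polynomial.aeval ((ω k : ℂ) * Complex.I) B
              / Polynomial.aeval ((ω k : ℂ) * Complex.I) A‖)
          * Real.sin (ω k * L
              + Complex.arg (Polynomial.aeval ((ω k : ℂ) * Complex.I) B
                  / Polynomial.aeval ((ω k : ℂ) * Complex.I) A))) :
    Tendsto (fun k => Real.sin (ω k * L
        + Complex.arg (Polynomial.aeval ((ω k : ℂ) * Complex.I) B
            / Polynomial.aeval ((ω k : ℂ) * Complex.I) A))) atTop (nhds 0) ∧
    Tendsto (fun k => Metric.infDist (ω k)
        ({x : ℝ | ∃ n : ℕ, x = n * Real.pi / L} ∪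
         {x : ℝ | ∃ n : ℕ, x = (n + 1/2) * Real.pi / L})) atTop (nhds 0) := by
  have hB : B ≠ 0 := ne_zero_of_natDegree_gt (n := 0) (by omega)
  have hc : B.leadingCoeff / A.leadingCoeff ≠ 0 :=
    div_ne_zero (leadingCoeff_ne_zero.2 hB) (leadingCoeff_ne_zero.2 hA)
  have hz := tendsto_aeval_div_aeval_div_leading_monomial A B hA hB (by omega)
  have hsin : Tendsto (fun k => Real.sin (ω k * L
      + Complex.arg (Polynomial.aeval ((ω k : ℂ) * Complex.I) B
          / Polynomial.aeval ((ω k : ℂ) * Complex.I) A))) atTop (𝓝 0) := by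
    have hlim :=
      ((tendsto_div_norm_of_tendsto_div_monomial hz hc (by omega)).comp htop).const_mul (-kP)
    rw [mul_zero] at hlim
    refine hlim.congr' ?_
    filter_upwards [htop.eventually (hz.eventually_ne one_ne_zero)] with k hk
    have hzk : ‖Polynomial.aeval ((ω k : ℂ) * Complex.I) B
        / Polynomial.aeval ((ω k : ℂ) * Complex.I) A‖ ≠ 0 :=
      norm_ne_zero_iff.2 fun h0 => hk (by rw [h0, zero_div])
    simp only [Function.comp_apply]
    field_simp
    linarith [hsing k]
  refine ⟨hsin, ?_⟩
  obtain ⟨j, hj⟩ := exists_int_tendsto_sub_mul_pi_div_two hsin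
    ((tendsto_sin_two_mul_arg_of_tendsto_div_monomial hz hc).comp htop)
  exact tendsto_infDist_of_tendsto_sub_int_mul_pi_div_two hL htop hj

/-- High-frequency behavior of singular frequencies for time-delay loops:
along any sequence of singular frequencies `ω_k → ∞` (for fixed `k_P ≠ 0`),
`sin(ω_k L + φ(ω_k)) → 0`, and the distance from `ω_k` to the set
`{kπ/L : k ∈ ℕ} ∪ {(k+1/2)π/L : k ∈ ℕ}` tends to `0`. -/
theorem singular_frequencies_high_frequency (A B : Polynomial ℝ) (L kP : ℝ)
    (hL : 0 < L) (hkP : kP ≠ 0) (hA : A ≠ 0) (hB : B ≠ 0)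
    (hnm : A.natDegree + 2 ≤ B.natDegree)
    (ω : ℕ → ℝ) (hpos : ∀ k, 0 < ω k)
    (hAne : ∀ k, Polynomial.aeval ((ω k : ℂ) * Complex.I) A ≠ 0)
    (htop : Tendsto ω atTop atTop)
    (hsing : ∀ k, ω k * kP
        = -(‖Polynomial.aeval ((ω k : ℂ) * Complex.I) B
              / Polynomial.aeval ((ω k : ℂ) * Complex.I) A‖)
          * Real.sin (ω k * L
              + Complex.arg (Polynomial.aeval ((ω k : ℂ) * Complex.I) B
                  / Polynomial.aeval ((ω k : ℂ) * Complex.I) A))) :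
    Tendsto (fun k => Real.sin (ω k * L
        + Complex.arg (Polynomial.aeval ((ω k : ℂ) * Complex.I) B
            / Polynomial.aeval ((ω k : ℂ) * Complex.I) A))) atTop (nhds 0) ∧
    Tendsto (fun k => Metric.infDist (ω k)
        ({x : ℝ | ∃ n : ℕ, x = n * Real.pi / L} ∪
         {x : ℝ | ∃ n : ℕ, x = (n + 1/2) * Real.pi / L})) atTop (nhds 0) :=
  singular_frequencies_high_frequency_general A B L kP hL hA hnm ω htop hsing
end
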